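/- Let H be a Jacobi operator and z ∈ ℂ. If u, v ∈ ℂ^ℤ are solutions of Hu = zu and Hv = zv that are both square-summable at +∞ (i.e. Σ_{n≥0}|u_n|² < ∞ and Σ_{n≥0}|v_n|² < ∞), then u and v are linearly dependent; that is, a solution which is ℓ² at +∞ is unique up to a multiplicative constant. -/

import Mathlib

/-!
The Wronskian `W n = a n (u (n+1) v n - u n v (n+1))` of two solutions has constant modulus,
since `W n = conj (a (n-1)) (u n v (n-1) - u (n-1) v n)`. If `u` and `v` are `ℓ²` at `+∞` they
tend to `0` there, and as `a` is bounded so does `W`; hence `W ≡ 0`. Then `(u 0, u 1)` and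
`(v 0, v 1)` are proportional, and a solution vanishing at `0` and `1` vanishes identically
because `a n ≠ 0` lets the recurrence be run in both directions.
-/

open scoped ComplexConjugate
open Filter Topology

lemma tendsto_zero_of_summable_norm_sq {E : Type*} [SeminormedAddCommGroup E] {f : ℕ → E}
    (hf : Summable fun n => ‖f n‖ ^ 2) : Tendsto f atTop (𝓝 0) := by
  rw [tendsto_zero_iff_norm_tendsto_zero]
  simpa [Real.sqrt_sq (norm_nonneg _)] using hf.tendsto_atTop_zero.sqrt

namespace Jacobi

variable {a : ℤ → ℂ} {b : ℤ → ℝ} {z : ℂ} {u v : ℤ → ℂ}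

def IsSolution (a : ℤ → ℂ) (b : ℤ → ℝ) (z : ℂ) (u : ℤ → ℂ) : Prop :=
  ∀ n : ℤ, (b n : ℂ) * u n + a n * u (n + 1) + conj (a (n - 1)) * u (n - 1) = z * u n

def wronskian (a : ℤ → ℂ) (u v : ℤ → ℂ) (n : ℤ) : ℂ :=
  a n * (u (n + 1) * v n - u n * v (n + 1))

lemma IsSolution.linearCombination (hu : IsSolution a b z u) (hv : IsSolution a b z v)
    (c d : ℂ) : IsSolution a b z fun n => c * u n + d * v n := fun n => by
  linear_combination c * hu n + d * hv n

lemma IsSolution.eq_zero_succ (ha0 : ∀ n, a n ≠ 0) (hu : IsSolution a b z u) {n : ℤ}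
    (h₁ : u (n - 1) = 0) (h₂ : u n = 0) : u (n + 1) = 0 := by
  have h := hu n
  rw [h₁, h₂] at h
  exact (mul_eq_zero.mp (by linear_combination h)).resolve_left (ha0 n)

lemma IsSolution.eq_zero_pred (ha0 : ∀ n, a n ≠ 0) (hu : IsSolution a b z u) {n : ℤ}
    (h₁ : u n = 0) (h₂ : u (n + 1) = 0) : u (n - 1) = 0 := by
  have h := hu n
  rw [h₁, h₂] at h
  have hconj : conj (a (n - 1)) ≠ 0 := (map_ne_zero _).mpr (ha0 _)
  exact (mul_eq_zero.mp (by linear_combination h)).resolve_left hconj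

lemma IsSolution.eq_zero_of_eq_zero_of_eq_zero (ha0 : ∀ n, a n ≠ 0) (hu : IsSolution a b z u)
    (h₀ : u 0 = 0) (h₁ : u 1 = 0) : u = 0 := by
  suffices h : ∀ n : ℤ, u n = 0 ∧ u (n + 1) = 0 from funext fun n => (h n).1
  intro n
  induction n using Int.induction_on with
  | zero => exact ⟨h₀, h₁⟩
  | succ i ih =>
    refine ⟨ih.2, hu.eq_zero_succ ha0 ?_ ih.2⟩
    simpa using ih.1
  | pred i ih =>
    refine ⟨hu.eq_zero_pred ha0 ih.1 ih.2, ?_⟩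
    simpa using ih.1

lemma IsSolution.wronskian_eq (hu : IsSolution a b z u) (hv : IsSolution a b z v) (n : ℤ) :
    wronskian a u v n = conj (a (n - 1)) * (u n * v (n - 1) - u (n - 1) * v n) := by
  unfold wronskian
  linear_combination v n * hu n - u n * hv n

lemma IsSolution.norm_wronskian_add_one (hu : IsSolution a b z u) (hv : IsSolution a b z v)
    (n : ℤ) : ‖wronskian a u v (n + 1)‖ = ‖wronskian a u v n‖ := by
  rw [hu.wronskian_eq hv, add_sub_cancel_right, wronskian, norm_mul, norm_mul,
    RCLike.norm_conj]

lemma IsSolution.norm_wronskian_natCast (hu : IsSolution a b z u) (hv : IsSolution a b z v)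
    (k : ℕ) : ‖wronskian a u v k‖ = ‖wronskian a u v 0‖ := by
  induction k with
  | zero => rfl
  | succ k ih => rw [Nat.cast_succ, hu.norm_wronskian_add_one hv, ih]

lemma tendsto_wronskian_atTop {C : ℝ} (haC : ∀ n, ‖a n‖ ≤ C)
    (hu : Tendsto (fun k : ℕ => u k) atTop (𝓝 0)) (hv : Tendsto (fun k : ℕ => v k) atTop (𝓝 0)) :
    Tendsto (fun k : ℕ => wronskian a u v k) atTop (𝓝 0) := by
  have shift : ∀ {w : ℤ → ℂ}, Tendsto (fun k : ℕ => w k) atTop (𝓝 0) →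
      Tendsto (fun k : ℕ => w (k + 1)) atTop (𝓝 0) := fun hw => by
    simpa [Function.comp_def] using hw.comp (tendsto_add_atTop_nat 1)
  have hdet : Tendsto (fun k : ℕ => u (k + 1) * v k - u k * v (k + 1)) atTop (𝓝 0) := by
    simpa using ((shift hu).mul hv).sub (hu.mul (shift hv))
  rw [tendsto_zero_iff_norm_tendsto_zero] at hdet ⊢
  refine squeeze_zero (fun _ => norm_nonneg _) (fun k => ?_) (by simpa using hdet.const_mul C)
  rw [wronskian, norm_mul]
  exact mul_le_mul_of_nonneg_right (haC _) (norm_nonneg _)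

lemma IsSolution.wronskian_zero_eq_zero {C : ℝ} (haC : ∀ n, ‖a n‖ ≤ C)
    (hu : IsSolution a b z u) (hv : IsSolution a b z v)
    (hu2 : Summable fun n : ℕ => ‖u n‖ ^ 2) (hv2 : Summable fun n : ℕ => ‖v n‖ ^ 2) :
    wronskian a u v 0 = 0 := by
  have hW := (tendsto_wronskian_atTop haC (tendsto_zero_of_summable_norm_sq hu2)
    (tendsto_zero_of_summable_norm_sq hv2)).norm
  simp_rw [hu.norm_wronskian_natCast hv, norm_zero] at hW
  exact norm_eq_zero.mp (tendsto_const_nhds_iff.mp hW)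

lemma IsSolution.exists_linearDependent_of_wronskian_eq_zero (ha0 : ∀ n, a n ≠ 0)
    (hu : IsSolution a b z u) (hv : IsSolution a b z v) (hW : wronskian a u v 0 = 0) :
    ∃ c d : ℂ, (c ≠ 0 ∨ d ≠ 0) ∧ ∀ n : ℤ, c * u n + d * v n = 0 := by
  have hdet : (!![u 0, v 0; u 1, v 1]).det = 0 := by
    have h := (mul_eq_zero.mp hW).resolve_left (ha0 0)
    rw [zero_add] at h
    rw [Matrix.det_fin_two_of]
    linear_combination -h
  obtain ⟨x, hx0, hx⟩ := Matrix.exists_mulVec_eq_zero_iff.mpr hdet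
  refine ⟨x 0, x 1, ?_, fun n => ?_⟩
  · by_contra! h
    exact hx0 (by ext i; fin_cases i <;> simp [h.1, h.2])
  · have hx₀ : x 0 * u 0 + x 1 * v 0 = 0 := by
      simpa [Matrix.mulVec, dotProduct, Fin.sum_univ_two, mul_comm] using congrFun hx 0
    have hx₁ : x 0 * u 1 + x 1 * v 1 = 0 := by
      simpa [Matrix.mulVec, dotProduct, Fin.sum_univ_two, mul_comm] using congrFun hx 1
    have h := (hu.linearCombination hv (x 0) (x 1)).eq_zero_of_eq_zero_of_eq_zero ha0 hx₀ hx₁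
    exact congrFun h n

end Jacobi

open Jacobi in
theorem jacobi_l2_at_plus_infinity_solution_unique_general
    (a : ℤ → ℂ) (b : ℤ → ℝ)
    (ha0 : ∀ n, a n ≠ 0)
    (haB : ∃ C, ∀ n, ‖a n‖ ≤ C)
    (z : ℂ) (u v : ℤ → ℂ)
    (hu : ∀ n : ℤ, (b n : ℂ) * u n + a n * u (n + 1) + conj (a (n - 1)) * u (n - 1) = z * u n)
    (hv : ∀ n : ℤ, (b n : ℂ) * v n + a n * v (n + 1) + conj (a (n - 1)) * v (n - 1) = z * v n)
    (hu2 : Summable fun n : ℕ => ‖u (n : ℤ)‖ ^ 2)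
    (hv2 : Summable fun n : ℕ => ‖v (n : ℤ)‖ ^ 2) :
    ∃ c d : ℂ, (c ≠ 0 ∨ d ≠ 0) ∧ ∀ n : ℤ, c * u n + d * v n = 0 := by
  obtain ⟨C, haC⟩ := haB
  have hu' : IsSolution a b z u := hu
  have hv' : IsSolution a b z v := hv
  exact hu'.exists_linearDependent_of_wronskian_eq_zero ha0 hv'
    (hu'.wronskian_zero_eq_zero haC hv' hu2 hv2)

/-- A solution of a Jacobi difference equation which is `ℓ²` at `+∞` is unique up to a
multiplicative constant: any two such solutions are linearly dependent. -/
theorem jacobi_l2_at_plus_infinity_solution_unique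
    (a : ℤ → ℂ) (b : ℤ → ℝ)
    (ha0 : ∀ n, a n ≠ 0)
    (haB : ∃ C, ∀ n, ‖a n‖ ≤ C) (hbB : ∃ C, ∀ n, |b n| ≤ C)
    (z : ℂ) (u v : ℤ → ℂ)
    (hu : ∀ n : ℤ, (b n : ℂ) * u n + a n * u (n + 1) + conj (a (n - 1)) * u (n - 1) = z * u n)
    (hv : ∀ n : ℤ, (b n : ℂ) * v n + a n * v (n + 1) + conj (a (n - 1)) * v (n - 1) = z * v n)
    (hu2 : Summable fun n : ℕ => ‖u (n : ℤ)‖ ^ 2)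
    (hv2 : Summable fun n : ℕ => ‖v (n : ℤ)‖ ^ 2) :
    ∃ c d : ℂ, (c ≠ 0 ∨ d ≠ 0) ∧ ∀ n : ℤ, c * u n + d * v n = 0 :=
  jacobi_l2_at_plus_infinity_solution_unique_general a b ha0 haB z u v hu hv hu2 hv2
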